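/- Let ℓ ≥ 2 and n ≥ 1. The n-th power Ω_ℓⁿ ∈ U(so(4ℓ,ℂ)) satisfies: (a) [E, Ω_ℓⁿ] = 0 for every simple positive root vector E of so(4ℓ,ℂ) (i.e. for E = e_{ε_k−ε_{k+1}}, 1 ≤ k ≤ 2ℓ−1, and E = e_{ε_{2ℓ−1}+ε_{2ℓ}}); and (b) [H(a), Ω_ℓⁿ] = n(a₁+⋯+a_{2ℓ}) Ω_ℓⁿ for every a ∈ ℂ^{2ℓ}. Thus Ω_ℓⁿ is a highest weight vector of weight 2nω_{2ℓ} = n(ε₁+⋯+ε_{2ℓ}) for the adjoint action of so(4ℓ,ℂ) on its universal enveloping algebra. (This is the finite-dimensional Lie-algebraic content of the theorem that w_n is a singular vector in V^{n−2ℓ+1}(D_{2ℓ}).) -/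

import Mathlib

open Matrix

attribute [local instance 100] LieRing.ofAssociativeRing

noncomputable section

/-- The symmetric `2n × 2n` matrix `G` with `G_{i, n+i} = G_{n+i, i} = 1` (`1 ≤ i ≤ n`) and all
other entries zero (written here with 0-indexed indices `0, …, 2n-1`). -/
def Gmat (n : ℕ) : Matrix (Fin (2*n)) (Fin (2*n)) ℂ :=
  Matrix.of fun i j => if (i : ℕ) + n = (j : ℕ) ∨ (j : ℕ) + n = (i : ℕ) then 1 else 0

/-- The split orthogonal Lie algebra `so(2n, ℂ)`: the Lie algebra of `2n × 2n` complex
matrices `X` with `Xᵀ G + G X = 0`, i.e. the skew-adjoint matrices for the form `Gmat n`. -/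
def so (n : ℕ) : LieSubalgebra ℂ (Matrix (Fin (2*n)) (Fin (2*n)) ℂ) :=
  skewAdjointMatricesLieSubalgebra (Gmat n)

/-- The inclusion `{0, …, n-1} ⊆ {0, …, 2n-1}` of indices. -/
def lo {n : ℕ} (i : Fin n) : Fin (2*n) := ⟨(i : ℕ), by have := i.isLt; omega⟩

/-- The index `n + i ∈ {n, …, 2n-1}`. -/
def hi {n : ℕ} (i : Fin n) : Fin (2*n) := ⟨n + (i : ℕ), by have := i.isLt; omega⟩

/-- The matrix `e_{ε_i − ε_j} = E_{i,j} − E_{n+j, n+i}`. -/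
def eM {n : ℕ} (i j : Fin n) : Matrix (Fin (2*n)) (Fin (2*n)) ℂ :=
  Matrix.single (lo i) (lo j) 1 - Matrix.single (hi j) (hi i) 1

/-- The matrix `e_{ε_i + ε_j} = E_{i,n+j} − E_{j, n+i}`. -/
def eP {n : ℕ} (i j : Fin n) : Matrix (Fin (2*n)) (Fin (2*n)) ℂ :=
  Matrix.single (lo i) (hi j) 1 - Matrix.single (lo j) (hi i) 1

/-- The "swap" `b ↦ b ± n` on indices, so that `Gmat n k b = δ_{k, Gsw b}`. -/
def Gsw {n : ℕ} (b : Fin (2*n)) : Fin (2*n) :=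
  ⟨if (b:ℕ) < n then (b:ℕ) + n else (b:ℕ) - n, by have := b.isLt; split <;> omega⟩

lemma Gmat_apply {n : ℕ} (k b : Fin (2*n)) :
    Gmat n k b = if k = Gsw b then 1 else 0 := by
  have hk := k.isLt; have hb := b.isLt
  have h : ((k:ℕ) + n = (b:ℕ) ∨ (b:ℕ) + n = (k:ℕ)) ↔ (k = Gsw b) := by
    rw [Fin.ext_iff]
    show _ ↔ (k:ℕ) = if (b:ℕ) < n then (b:ℕ) + n else (b:ℕ) - n
    split <;> omega
  simp only [Gmat, Matrix.of_apply]
  rw [if_congr h rfl rfl]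

lemma mul_Gmat_apply {n : ℕ} (M : Matrix (Fin (2*n)) (Fin (2*n)) ℂ) (a b : Fin (2*n)) :
    (M * Gmat n) a b = M a (Gsw b) := by
  rw [Matrix.mul_apply]
  rw [Finset.sum_congr rfl fun k _ => by rw [Gmat_apply]]
  simp

lemma Gmat_mul_apply {n : ℕ} (M : Matrix (Fin (2*n)) (Fin (2*n)) ℂ) (a b : Fin (2*n)) :
    (Gmat n * M) a b = M (Gsw a) b := by
  rw [Matrix.mul_apply]
  have h' : ∀ k : Fin (2*n), Gmat n a k = if k = Gsw a then 1 else 0 := by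
    intro k
    have hk := k.isLt; have ha := a.isLt
    have h : ((a:ℕ) + n = (k:ℕ) ∨ (k:ℕ) + n = (a:ℕ)) ↔ (k = Gsw a) := by
      rw [Fin.ext_iff]
      show _ ↔ (k:ℕ) = if (a:ℕ) < n then (a:ℕ) + n else (a:ℕ) - n
      split <;> omega
    simp only [Gmat, Matrix.of_apply]
    rw [if_congr h rfl rfl]
  rw [Finset.sum_congr rfl fun k _ => by rw [h' k]]
  simp

theorem eM_mem {n : ℕ} (i j : Fin n) : eM i j ∈ so n := by
  rw [so, mem_skewAdjointMatricesLieSubalgebra, mem_skewAdjointMatricesSubmodule]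
  show (eM i j)ᵀ * Gmat n = Gmat n * (-(eM i j))
  ext a b
  rw [mul_Gmat_apply, Gmat_mul_apply]
  have hi' := i.isLt; have hj' := j.isLt
  have ha := a.isLt; have hb := b.isLt
  simp only [eM, Matrix.transpose_apply, Matrix.neg_apply, Matrix.sub_apply,
    Matrix.single, Matrix.of_apply, lo, hi, Gsw, Fin.ext_iff]
  split_ifs <;> first | omega | norm_num

theorem eP_mem {n : ℕ} (i j : Fin n) : eP i j ∈ so n := by
  rw [so, mem_skewAdjointMatricesLieSubalgebra, mem_skewAdjointMatricesSubmodule]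
  show (eP i j)ᵀ * Gmat n = Gmat n * (-(eP i j))
  ext a b
  rw [mul_Gmat_apply, Gmat_mul_apply]
  have hi' := i.isLt; have hj' := j.isLt
  have ha := a.isLt; have hb := b.isLt
  simp only [eP, Matrix.transpose_apply, Matrix.neg_apply, Matrix.sub_apply,
    Matrix.single, Matrix.of_apply, lo, hi, Gsw, Fin.ext_iff]
  split_ifs <;> first | omega | norm_num

/-- `e_{ε_i − ε_j}` as an element of `so(2n, ℂ)`. -/
def eMinus {n : ℕ} (i j : Fin n) : so n := ⟨eM i j, eM_mem i j⟩

/-- `e_{ε_i + ε_j}` as an element of `so(2n, ℂ)`. -/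
def ePlus {n : ℕ} (i j : Fin n) : so n := ⟨eP i j, eP_mem i j⟩

/-- The Cartan element `H(a) = Σ_i a_i (E_{i,i} − E_{n+i,n+i})` as a matrix. -/
def Hmat {n : ℕ} (a : Fin n → ℂ) : Matrix (Fin (2*n)) (Fin (2*n)) ℂ :=
  ∑ i, a i • (Matrix.single (lo i) (lo i) 1 - Matrix.single (hi i) (hi i) 1)

theorem Hmat_mem {n : ℕ} (a : Fin n → ℂ) : Hmat a ∈ so n := by
  rw [so, mem_skewAdjointMatricesLieSubalgebra, mem_skewAdjointMatricesSubmodule]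
  show (Hmat a)ᵀ * Gmat n = Gmat n * (-(Hmat a))
  ext x y
  rw [mul_Gmat_apply, Gmat_mul_apply]
  have hx := x.isLt; have hy := y.isLt
  simp only [Hmat, Matrix.transpose_apply, Matrix.neg_apply, Matrix.sum_apply,
    Matrix.smul_apply, Matrix.sub_apply, Matrix.single, Matrix.of_apply,
    smul_eq_mul, neg_eq_iff_eq_neg, ← Finset.sum_neg_distrib]
  apply Finset.sum_congr rfl
  intro i _
  have hi' := i.isLt
  simp only [lo, hi, Gsw, Fin.ext_iff]
  split_ifs <;> first | omega | ring

/-- `H(a)` as an element of `so(2n, ℂ)` (the general element of the diagonal Cartan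
subalgebra). -/
def Hcar {n : ℕ} (a : Fin n → ℂ) : so n := ⟨Hmat a, Hmat_mem a⟩

/-- The universal enveloping algebra `U(so(2n, ℂ))`. -/
abbrev Uso (n : ℕ) : Type := UniversalEnvelopingAlgebra ℂ (so n)

/-- The canonical embedding `so(2n, ℂ) → U(so(2n, ℂ))`. -/
def uι {n : ℕ} (x : so n) : Uso n := UniversalEnvelopingAlgebra.ι ℂ x

/-- The set `Π_ℓ` of fixed-point-free involutions of `{1, …, 2ℓ}` (realised on `Fin (2ℓ)`):
permutations `p` with `p² = 1` and `p(i) ≠ i` for all `i`. -/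
def FPFI (l : ℕ) : Finset (Equiv.Perm (Fin (2*l))) :=
  Finset.univ.filter fun p => p * p = 1 ∧ ∀ i, p i ≠ i

/-- The increasing list `i₁ < i₂ < ⋯ < i_ℓ` of left endpoints `{i | i < p i}` of the pairs of a
fixed-point-free involution `p`. -/
def leftPoints (l : ℕ) (p : Equiv.Perm (Fin (2*l))) : List (Fin (2*l)) :=
  (Finset.univ.filter fun i => i < p i).sort (· ≤ ·)

/-- The list `[i₁, j₁, i₂, j₂, …, i_ℓ, j_ℓ]` coming from the canonical decomposition of a
fixed-point-free involution `p` into disjoint transpositions `(i₁ j₁)⋯(i_ℓ j_ℓ)` with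
`i_h < j_h` for all `h` and `i₁ < ⋯ < i_ℓ`. -/
def pairList (l : ℕ) (p : Equiv.Perm (Fin (2*l))) : List (Fin (2*l)) :=
  (leftPoints l p).flatMap fun i => [i, p i]

/-- The function underlying the permutation `p̄` defined by `p̄(2h−1) = i_h`, `p̄(2h) = j_h`. -/
def pbarFun (l : ℕ) (p : Equiv.Perm (Fin (2*l))) (k : Fin (2*l)) : Fin (2*l) :=
  (pairList l p).getD (k : ℕ) k

/-- The permutation `p̄ ∈ S_{2ℓ}` with `p̄(2h−1) = i_h` and `p̄(2h) = j_h`; for a fixed-point-free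
involution `p` the function `pbarFun l p` is bijective and `p̄` is the induced permutation. -/
def pbar (l : ℕ) (p : Equiv.Perm (Fin (2*l))) : Equiv.Perm (Fin (2*l)) :=
  if h : Function.Bijective (pbarFun l p) then Equiv.ofBijective _ h else 1

/-- The sign `s(p) = sign(p̄) ∈ {±1}` of a fixed-point-free involution, viewed in `ℂ`. -/
def sgn (l : ℕ) (p : Equiv.Perm (Fin (2*l))) : ℂ :=
  ((Equiv.Perm.sign (pbar l p) : ℤ) : ℂ)

/-- The element `Ω_ℓ = Σ_{p ∈ Π_ℓ} s(p) · e_{ε_{i₁}+ε_{j₁}} ⋯ e_{ε_{i_ℓ}+ε_{j_ℓ}}` of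
`U(so(4ℓ, ℂ))`, where for each `p ∈ Π_ℓ` the pairs `(i_h, j_h)` are those of its canonical
decomposition (the factors pairwise commute, and are taken in the canonical order). -/
def Omega (l : ℕ) : Uso (2*l) :=
  ∑ p ∈ FPFI l, sgn l p • ((leftPoints l p).map fun i => uι (ePlus i (p i))).prod

/-!
`Ω_ℓ` is the Pfaffian of the antisymmetric matrix `X = (e_{ε_i+ε_j})_{i,j}`, whose entries
commute in `U(so(4ℓ))`. Up to the nonzero factor `#C = 2^ℓ ℓ!` (`C` the centralizer of the
matching `{2h, 2h+1}`), it is the alternating sum `∑_σ sign σ ∏_h X_{σ(2h), σ(2h+1)}`.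

`ad e_{ε_k−ε_m}` is a derivation substituting the index `m` by `k` in one entry, so on this
alternating sum it produces the alternating sum of a non-injective reindexing, which vanishes.
The `e_{ε_i+ε_j}` commute with every entry, and `X_{ij}` has weight `a_i + a_j` under `ad H(a)`,
so every monomial of `Ω_ℓ` has weight `∑ a_i`. Weights add under multiplication, which
gives the claims for `Ω_ℓⁿ`.
-/

open Equiv Finset

lemma Matrix.single_mul_single_eq_ite {ι α : Type*} [Fintype ι] [DecidableEq ι] [Semiring α]
    (a b c d : ι) (x y : α) :
    Matrix.single a b x * Matrix.single c d y = if b = c then Matrix.single a d (x * y) else 0 := by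
  split_ifs with h
  · rw [h, Matrix.single_mul_single_same]
  · simp [h]

section Matrices

variable {n : ℕ}

lemma lo_injective : Function.Injective (lo (n := n)) := fun i j h => by
  simpa [lo, Fin.ext_iff] using h

lemma hi_injective : Function.Injective (hi (n := n)) := fun i j h => by
  simpa [hi, Fin.ext_iff] using h

lemma lo_ne_hi (i j : Fin n) : lo i ≠ hi j := by
  simp only [lo, hi, ne_eq, Fin.ext_iff]; omega

lemma eP_mul_eP (i j i' j' : Fin n) : eP i j * eP i' j' = 0 := by
  simp [eP, sub_mul, mul_sub, (lo_ne_hi _ _).symm]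

lemma eP_swap (i j : Fin n) : eP j i = -eP i j := by
  rw [eP, eP, neg_sub]

lemma eM_lie_eP (k m i j : Fin n) :
    ⁅eM k m, eP i j⁆ = (if m = i then eP k j else 0) + (if m = j then eP i k else 0) := by
  rw [Ring.lie_def]
  rcases eq_or_ne m i with rfl | hmi <;> rcases eq_or_ne m j with rfl | hmj <;>
    simp [eM, eP, sub_mul, mul_sub, lo_injective.eq_iff, hi_injective.eq_iff, (lo_ne_hi _ _).symm,
      *, eq_comm (b := m)]
  abel

lemma Hmat_lie_single (a : Fin n → ℂ) (i j : Fin n) :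
    ⁅Hmat a, Matrix.single (lo i) (hi j) (1 : ℂ)⁆
      = (a i + a j) • Matrix.single (lo i) (hi j) 1 := by
  simp only [Ring.lie_def, Hmat, smul_sub, Matrix.smul_single, smul_eq_mul, mul_one, sum_mul,
    mul_sum, sub_mul, mul_sub, Matrix.single_mul_single_eq_ite, lo_injective.eq_iff,
    hi_injective.eq_iff, (lo_ne_hi _ _).symm, one_mul]
  simp [sum_ite_eq', Matrix.single_add]

end Matrices

section Enveloping

variable {n : ℕ}

lemma uι_lie (x y : so n) : uι ⁅x, y⁆ = ⁅uι x, uι y⁆ :=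
  LieHom.map_lie _ x y

lemma ePlus_swap (i j : Fin n) : ePlus j i = -ePlus i j :=
  Subtype.ext (eP_swap i j)

lemma ePlus_lie_ePlus (i j i' j' : Fin n) : ⁅ePlus i j, ePlus i' j'⁆ = 0 :=
  Subtype.ext (by
    change ⁅eP i j, eP i' j'⁆ = 0
    rw [Ring.lie_def, eP_mul_eP, eP_mul_eP, sub_zero])

lemma eMinus_lie_ePlus (k m i j : Fin n) :
    ⁅eMinus k m, ePlus i j⁆
      = (if m = i then ePlus k j else 0) + (if m = j then ePlus i k else 0) :=
  Subtype.ext (by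
    change ⁅eM k m, eP i j⁆ = _
    rw [eM_lie_eP]
    split_ifs <;> rfl)

lemma Hcar_lie_ePlus (a : Fin n → ℂ) (i j : Fin n) :
    ⁅Hcar a, ePlus i j⁆ = (a i + a j) • ePlus i j :=
  Subtype.ext (by
    change ⁅Hmat a, eP i j⁆ = (a i + a j) • eP i j
    rw [eP, lie_sub, Hmat_lie_single, Hmat_lie_single, add_comm (a j), smul_sub])

lemma commute_uι_ePlus (i j i' j' : Fin n) : Commute (uι (ePlus i j)) (uι (ePlus i' j')) := by
  rw [commute_iff_lie_eq, ← uι_lie, ePlus_lie_ePlus, uι, map_zero]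

-- Being commutative, it can host `Finset` products of the `e_{ε_i+ε_j}` and the Pfaffian.
def plusSubalgebra (n : ℕ) : Subalgebra ℂ (Uso n) :=
  Algebra.adjoin ℂ (Set.range fun ij : Fin n × Fin n => uι (ePlus ij.1 ij.2))

instance (n : ℕ) : IsMulCommutative (plusSubalgebra n) :=
  Algebra.isMulCommutative_adjoin ℂ <| by
    rintro _ ⟨⟨i, j⟩, rfl⟩ _ ⟨⟨i', j'⟩, rfl⟩
    exact commute_uι_ePlus i j i' j'

open scoped IsMulCommutative

def plusGen (i j : Fin n) : plusSubalgebra n :=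
  ⟨uι (ePlus i j), Algebra.subset_adjoin ⟨(i, j), rfl⟩⟩

lemma val_plusGen (i j : Fin n) : (plusSubalgebra n).val (plusGen i j) = uι (ePlus i j) := rfl

lemma plusGen_swap (i j : Fin n) : plusGen j i = -plusGen i j :=
  Subtype.ext (by
    change uι (ePlus j i) = -uι (ePlus i j)
    rw [ePlus_swap, uι, uι, map_neg])

end Enveloping

section Pairings

variable {l : ℕ}

def pairIdx (l : ℕ) : Fin l × Fin 2 ≃ Fin (2 * l) :=
  finProdFinEquiv.trans (finCongr (Nat.mul_comm l 2))

lemma val_pairIdx (h : Fin l) (t : Fin 2) : (pairIdx l (h, t) : ℕ) = 2 * h + t := by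
  simp [pairIdx, add_comm]

def pairSwap (l : ℕ) : Perm (Fin (2 * l)) :=
  (pairIdx l).permCongr (prodCongrRight fun _ => swap 0 1)

lemma pairSwap_pairIdx (h : Fin l) (t : Fin 2) :
    pairSwap l (pairIdx l (h, t)) = pairIdx l (h, swap 0 1 t) := by
  simp [pairSwap, permCongr_apply]

lemma pairSwap_ne (x : Fin (2 * l)) : pairSwap l x ≠ x := by
  obtain ⟨⟨h, t⟩, rfl⟩ := (pairIdx l).surjective x
  rw [pairSwap_pairIdx, Ne, (pairIdx l).injective.eq_iff]
  fin_cases t <;> simp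

lemma pairSwap_mul_self : pairSwap l * pairSwap l = 1 := by
  ext x
  obtain ⟨⟨h, t⟩, rfl⟩ := (pairIdx l).surjective x
  simp [pairSwap_pairIdx]

lemma mem_FPFI {p : Perm (Fin (2 * l))} : p ∈ FPFI l ↔ p * p = 1 ∧ ∀ i, p i ≠ i := by
  simp [FPFI]

lemma conj_mem_FPFI (σ : Perm (Fin (2 * l))) : σ * pairSwap l * σ⁻¹ ∈ FPFI l := by
  refine mem_FPFI.2 ⟨?_, fun i hi => pairSwap_ne (σ⁻¹ i) (σ.injective ?_)⟩
  · calc σ * pairSwap l * σ⁻¹ * (σ * pairSwap l * σ⁻¹)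
        = σ * (pairSwap l * pairSwap l) * σ⁻¹ := by group
      _ = 1 := by rw [pairSwap_mul_self, mul_one, mul_inv_cancel]
  · simpa [Perm.mul_apply] using hi

end Pairings

section LeftPoints

variable {l : ℕ} {p : Perm (Fin (2 * l))}

lemma apply_apply_of_mem_FPFI (hp : p ∈ FPFI l) (i : Fin (2 * l)) : p (p i) = i := by
  rw [← Perm.mul_apply, (mem_FPFI.1 hp).1, Perm.one_apply]

lemma apply_ne_of_mem_FPFI (hp : p ∈ FPFI l) (i : Fin (2 * l)) : p i ≠ i := (mem_FPFI.1 hp).2 i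

lemma mem_leftPoints {i : Fin (2 * l)} : i ∈ leftPoints l p ↔ i < p i := by
  simp [leftPoints]

lemma sum_map_leftPoints {M : Type*} [AddCommMonoid M] (hp : p ∈ FPFI l) (a : Fin (2 * l) → M) :
    ((leftPoints l p).map fun i => a i + a (p i)).sum = ∑ x, a x := by
  have himage : (univ.filter fun i => i < p i).image p = univ.filter fun i => ¬i < p i := by
    ext x
    simp only [mem_image, mem_filter, mem_univ, true_and, not_lt]
    refine ⟨?_, fun hx => ⟨p x, ?_, apply_apply_of_mem_FPFI hp x⟩⟩
    · rintro ⟨i, hi, rfl⟩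
      rw [apply_apply_of_mem_FPFI hp]
      exact hi.le
    · rw [apply_apply_of_mem_FPFI hp]
      exact lt_of_le_of_ne hx (apply_ne_of_mem_FPFI hp x)
  rw [leftPoints, ← List.sum_toFinset _ (sort_nodup _ _), sort_toFinset, sum_add_distrib,
    ← sum_image p.injective.injOn, himage, sum_filter_add_sum_filter_not]

lemma length_leftPoints (hp : p ∈ FPFI l) : (leftPoints l p).length = l := by
  have h := sum_map_leftPoints hp fun _ => 1
  simp only [List.map_const', List.sum_replicate, sum_const, card_univ, Fintype.card_fin,
    smul_eq_mul] at h
  omega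

end LeftPoints

lemma List.getElem?_flatMap_pair {α : Type*} (L : List α) (g : α → α) {k : ℕ}
    (hk : k < L.length) :
    (L.flatMap fun a => [a, g a])[2 * k]? = some L[k] ∧
      (L.flatMap fun a => [a, g a])[2 * k + 1]? = some (g L[k]) := by
  induction L generalizing k with
  | nil => exact absurd hk (Nat.not_lt_zero k)
  | cons a L ih =>
    cases k with
    | zero => simp
    | succ k =>
      have := ih (Nat.lt_of_succ_lt_succ hk)
      simpa [Nat.mul_succ] using this

section Pbar

variable {l : ℕ} {p : Perm (Fin (2 * l))}

lemma pbarFun_pairIdx (hp : p ∈ FPFI l) (h : Fin l) :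
    pbarFun l p (pairIdx l (h, 0))
        = (leftPoints l p)[(h : ℕ)]'(by simp [length_leftPoints hp]) ∧
      pbarFun l p (pairIdx l (h, 1))
        = p ((leftPoints l p)[(h : ℕ)]'(by simp [length_leftPoints hp])) := by
  obtain ⟨h0, h1⟩ := List.getElem?_flatMap_pair (leftPoints l p) p (k := h)
    (by simp [length_leftPoints hp])
  simp [pbarFun, pairList, val_pairIdx, List.getD_eq_getElem?_getD, h0, h1]

lemma bijective_pbarFun (hp : p ∈ FPFI l) : Function.Bijective (pbarFun l p) := by
  refine Finite.surjective_iff_bijective.1 fun x => ?_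
  have hmem : ∀ y ∈ leftPoints l p, ∃ h : Fin l,
      (leftPoints l p)[(h : ℕ)]'(by simp [length_leftPoints hp]) = y := by
    intro y hy
    obtain ⟨k, hk, rfl⟩ := List.getElem_of_mem hy
    exact ⟨⟨k, length_leftPoints hp ▸ hk⟩, rfl⟩
  rcases lt_or_gt_of_ne (apply_ne_of_mem_FPFI hp x).symm with hx | hx
  · obtain ⟨h, hh⟩ := hmem x (mem_leftPoints.2 hx)
    exact ⟨_, (pbarFun_pairIdx hp h).1.trans hh⟩
  · obtain ⟨h, hh⟩ := hmem (p x) (mem_leftPoints.2 (by rwa [apply_apply_of_mem_FPFI hp]))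
    exact ⟨_, (pbarFun_pairIdx hp h).2.trans (by rw [hh, apply_apply_of_mem_FPFI hp])⟩

lemma pbar_apply (hp : p ∈ FPFI l) (x : Fin (2 * l)) : pbar l p x = pbarFun l p x := by
  rw [pbar, dif_pos (bijective_pbarFun hp), Equiv.ofBijective_apply]

lemma conj_pbar (hp : p ∈ FPFI l) : pbar l p * pairSwap l * (pbar l p)⁻¹ = p := by
  rw [mul_inv_eq_iff_eq_mul]
  ext x
  obtain ⟨⟨h, t⟩, rfl⟩ := (pairIdx l).surjective x
  have := pbarFun_pairIdx hp h
  fin_cases t <;>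
    simp [pairSwap_pairIdx, pbar_apply hp, this, apply_apply_of_mem_FPFI hp]

end Pbar

lemma Equiv.Perm.exists_prodCongr_of_commute {α : Type*} [Fintype α] [DecidableEq α]
    {b : Perm (α × Fin 2)} (hb : Commute b (prodCongrRight fun _ => swap 0 1)) :
    ∃ (τ : Perm α) (ψ : α → Perm (Fin 2)),
      (∀ a t, b (a, t) = (τ a, ψ a t)) ∧ sign b = ∏ a, sign (ψ a) := by
  let ψ : α → Perm (Fin 2) := fun a => if (b (a, 0)).2 = 0 then 1 else swap 0 1
  have hbψ : ∀ a t, b (a, t) = ((b (a, 0)).1, ψ a t) := by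
    intro a t
    have h1 := congrArg (· (a, 0)) hb.eq
    simp only [Perm.mul_apply, prodCongrRight_apply, swap_apply_left] at h1
    simp only [ψ]
    generalize hc : b (a, 0) = c at h1 ⊢
    obtain ⟨c, s⟩ := c
    fin_cases s <;> fin_cases t <;> simp_all
  have hinj : Function.Injective fun a => (b (a, 0)).1 := fun a a' h => by
    have key : ∀ a, b (a, (ψ a)⁻¹ 0) = ((b (a, 0)).1, 0) := fun a => by rw [hbψ]; simp
    have := b.injective ((key a).trans (by rw [key a']; exact congrArg (·, (0 : Fin 2)) h))
    exact congrArg Prod.fst this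
  let τ := Equiv.ofBijective _ (Finite.injective_iff_bijective.1 hinj)
  have hb' : b = prodCongrLeft (fun _ => τ) * prodCongrRight ψ := by
    ext1 ⟨a, t⟩
    exact hbψ a t
  refine ⟨τ, ψ, hbψ, ?_⟩
  rw [hb', sign_mul, sign_prodCongrLeft, sign_prodCongrRight, Fin.prod_univ_two,
    Int.units_mul_self, one_mul]

section PairProduct

variable {R : Type*} [CommRing R] {l : ℕ}

def pairProd (x : Fin (2 * l) → Fin (2 * l) → R) (g : Fin (2 * l) → Fin (2 * l)) : R :=
  ∏ h : Fin l, x (g (pairIdx l (h, 0))) (g (pairIdx l (h, 1)))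

def pfaffian (x : Fin (2 * l) → Fin (2 * l) → R) : R :=
  ∑ p ∈ FPFI l, Perm.sign (pbar l p) • ((leftPoints l p).map fun i => x i (p i)).prod

lemma pairProd_pbar {p : Perm (Fin (2 * l))} (hp : p ∈ FPFI l)
    (x : Fin (2 * l) → Fin (2 * l) → R) :
    pairProd x (pbar l p) = ((leftPoints l p).map fun i => x i (p i)).prod := by
  rw [pairProd, ← List.ofFn_getElem_eq_map, List.prod_ofFn]
  refine Fintype.prod_equiv (finCongr (length_leftPoints hp).symm) _ _ fun h => ?_
  simp [pbar_apply hp, (pbarFun_pairIdx hp h).1, (pbarFun_pairIdx hp h).2]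

lemma apply_perm_fin_two_of_antisymm {β : Type*} {x : β → β → R}
    (hx : ∀ i j, x j i = -x i j)
    (y : Fin 2 → β) (ψ : Perm (Fin 2)) :
    x (y (ψ 0)) (y (ψ 1)) = Perm.sign ψ • x (y 0) (y 1) := by
  rcases (by decide : ∀ ψ : Perm (Fin 2), ψ = 1 ∨ ψ = swap 0 1) ψ with rfl | rfl
  · simp
  · rw [swap_apply_left, swap_apply_right, hx, Perm.sign_swap zero_ne_one, Units.neg_smul,
      one_smul]

-- `b` permutes the pairs `{2h, 2h+1}` and reverses some of them; each reversal contributes a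
-- factor `-1` both to `sign b` and, by antisymmetry, to the product.
lemma pairProd_mul_of_commute {x : Fin (2 * l) → Fin (2 * l) → R} (hx : ∀ i j, x j i = -x i j)
    (σ : Perm (Fin (2 * l))) {b : Perm (Fin (2 * l))} (hb : Commute b (pairSwap l)) :
    pairProd x ⇑(σ * b) = Perm.sign b • pairProd x σ := by
  have hswap :
      (pairIdx l).symm.permCongrHom (pairSwap l) = prodCongrRight fun _ => swap 0 1 := by
    ext1 ⟨h, t⟩
    change (pairIdx l).symm (pairSwap l (pairIdx l (h, t))) = (h, swap 0 1 t)
    rw [pairSwap_pairIdx, symm_apply_apply]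
  obtain ⟨τ, ψ, hτψ, hsign⟩ :=
    Perm.exists_prodCongr_of_commute (hswap ▸ hb.map (pairIdx l).symm.permCongrHom)
  have hb' : ∀ h t, b (pairIdx l (h, t)) = pairIdx l (τ h, ψ h t) := fun h t => by
    rw [← hτψ]
    simp [permCongrHom_coe, permCongr_apply]
  rw [permCongrHom_coe, Perm.sign_permCongr] at hsign
  have hfactor : ∀ h, x ((σ * b) (pairIdx l (h, 0))) ((σ * b) (pairIdx l (h, 1)))
      = ((Perm.sign (ψ h) : ℤ) : R) * x (σ (pairIdx l (τ h, 0))) (σ (pairIdx l (τ h, 1))) :=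
    fun h => by
    rw [Perm.mul_apply, Perm.mul_apply, hb', hb',
      apply_perm_fin_two_of_antisymm hx (fun t => σ (pairIdx l (τ h, t))), Units.smul_def,
      zsmul_eq_mul]
  rw [pairProd, prod_congr rfl fun h _ => hfactor h, prod_mul_distrib, hsign, Units.smul_def,
    zsmul_eq_mul, pairProd, Units.coe_prod, Int.cast_prod]
  congr 1
  exact Fintype.prod_equiv τ _ _ fun h => rfl

-- As `σ` is a bijection, the index `m` occurs in exactly one factor, and only once there.
lemma sum_prod_erase_mul_eq_pairProd_update (x : Fin (2 * l) → Fin (2 * l) → R)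
    (k m : Fin (2 * l)) (σ : Perm (Fin (2 * l))) :
    ∑ h, (∏ h' ∈ univ.erase h, x (σ (pairIdx l (h', 0))) (σ (pairIdx l (h', 1)))) *
        ((if m = σ (pairIdx l (h, 0)) then x k (σ (pairIdx l (h, 1))) else 0) +
          (if m = σ (pairIdx l (h, 1)) then x (σ (pairIdx l (h, 0))) k else 0))
      = pairProd x (Function.update id m k ∘ σ) := by
  obtain ⟨⟨h₀, t₀⟩, hm⟩ : ∃ ht, σ (pairIdx l ht) = m :=
    ⟨(pairIdx l).symm (σ⁻¹ m), by simp⟩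
  have hiff : ∀ h t, m = σ (pairIdx l (h, t)) ↔ (h, t) = (h₀, t₀) := fun h t => by
    rw [← hm, σ.injective.eq_iff, (pairIdx l).injective.eq_iff, eq_comm]
  rw [sum_eq_single h₀ (fun h _ hh => by simp [hiff, hh]) (by simp), pairProd,
    ← prod_erase_mul univ _ (mem_univ h₀)]
  congr 1
  · refine prod_congr rfl fun h hh => ?_
    have hh : h ≠ h₀ := ne_of_mem_erase hh
    simp only [Function.comp_apply]
    rw [Function.update_of_ne fun e => hh (congrArg Prod.fst ((hiff h 0).1 e.symm)),
      Function.update_of_ne fun e => hh (congrArg Prod.fst ((hiff h 1).1 e.symm))]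
    rfl
  · fin_cases t₀ <;> simp [← hm]

end PairProduct

lemma filter_conj_eq_image {G : Type*} [Group G] [Fintype G] [DecidableEq G] (s q : G) :
    univ.filter (fun g => g * s * g⁻¹ = q * s * q⁻¹)
      = (univ.filter fun b => b * s = s * b).image (q * ·) := by
  ext g
  simp only [mem_filter, mem_univ, true_and, mem_image]
  constructor
  · intro hg
    refine ⟨q⁻¹ * g, ?_, by group⟩
    calc q⁻¹ * g * s = q⁻¹ * (g * s * g⁻¹) * g := by group
      _ = s * (q⁻¹ * g) := by rw [hg]; group
  · rintro ⟨b, hb, rfl⟩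
    calc q * b * s * (q * b)⁻¹ = q * (b * s) * b⁻¹ * q⁻¹ := by group
      _ = q * s * q⁻¹ := by rw [hb]; group

section AlternatingSum

variable {R : Type*} [CommRing R] {l : ℕ}

-- Group the `σ` by the matching `σ * pairSwap l * σ⁻¹`: its fiber over `p` is the coset of
-- the centralizer through `pbar l p`, on which the summand is constant.
theorem card_centralizer_smul_pfaffian {x : Fin (2 * l) → Fin (2 * l) → R}
    (hx : ∀ i j, x j i = -x i j) :
    #(univ.filter fun b => b * pairSwap l = pairSwap l * b) • pfaffian x
      = ∑ σ : Perm (Fin (2 * l)), Perm.sign σ • pairProd x σ := by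
  rw [← sum_fiberwise_of_maps_to fun σ _ => conj_mem_FPFI σ, pfaffian, smul_sum]
  refine sum_congr rfl fun p hp => ?_
  have hfiber := filter_conj_eq_image (pairSwap l) (pbar l p)
  rw [conj_pbar hp] at hfiber
  have hconst : ∀ b ∈ univ.filter fun b => b * pairSwap l = pairSwap l * b,
      Perm.sign (pbar l p * b) • pairProd x ⇑(pbar l p * b)
        = Perm.sign (pbar l p) • pairProd x (pbar l p) := fun b hb => by
    rw [pairProd_mul_of_commute hx _ (mem_filter.1 hb).2, smul_smul, Perm.sign_mul, mul_assoc,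
      Int.units_mul_self, mul_one]
  rw [hfiber, sum_image fun _ _ _ _ => mul_left_cancel, sum_congr rfl hconst, sum_const,
    pairProd_pbar hp]

lemma sum_sign_smul_pairProd_comp_eq_zero (x : Fin (2 * l) → Fin (2 * l) → R)
    {f : Fin (2 * l) → Fin (2 * l)} {a b : Fin (2 * l)} (hab : a ≠ b) (hf : f a = f b) :
    ∑ σ : Perm (Fin (2 * l)), Perm.sign σ • pairProd x (f ∘ σ) = 0 := by
  have hfs : f ∘ swap a b = f := by
    ext y
    rcases eq_or_ne y a with rfl | hya
    · simp [hf]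
    rcases eq_or_ne y b with rfl | hyb
    · simp [hf]
    simp [swap_apply_of_ne_of_ne hya hyb]
  refine sum_involution (fun σ _ => swap a b * σ) (fun σ _ => ?_)
    (fun σ _ _ h => hab (swap_eq_refl_iff.1 (mul_eq_right.1 h))) (fun _ _ => mem_univ _)
    (fun σ _ => swap_mul_self_mul a b σ)
  rw [Perm.sign_mul, Perm.sign_swap hab, Perm.coe_mul, ← Function.comp_assoc, hfs, neg_one_mul,
    Units.neg_smul, add_neg_cancel]

end AlternatingSum

section Commutators

variable {B : Type*} [Ring B]

lemma lie_mul_leibniz (e u v : B) : ⁅e, u * v⁆ = ⁅e, u⁆ * v + u * ⁅e, v⁆ := by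
  simp only [Ring.lie_def]
  noncomm_ring

lemma lie_map_prod {ι R F : Type*} [DecidableEq ι] [CommRing R] [FunLike F R B]
    [RingHomClass F R B] (φ : F) (e : B) (y dy : ι → R)
    (hy : ∀ i, ⁅e, φ (y i)⁆ = φ (dy i)) (s : Finset ι) :
    ⁅e, φ (∏ i ∈ s, y i)⁆ = φ (∑ i ∈ s, (∏ j ∈ s.erase i, y j) * dy i) := by
  induction s using Finset.induction_on with
  | empty => simp [Ring.lie_def]
  | insert a s ha ih =>
    rw [prod_insert ha, map_mul, lie_mul_leibniz, ih, hy, ← map_mul, ← map_mul, ← map_add,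
      sum_insert ha, erase_insert ha, mul_sum, mul_comm]
    congr 2
    refine sum_congr rfl fun i hi => ?_
    rw [erase_insert_of_ne (ne_of_mem_of_not_mem hi ha).symm,
      prod_insert fun h => ha (mem_of_mem_erase h), mul_assoc]

lemma lie_list_prod_of_lie_eq_smul {K ι : Type*} [CommRing K] [Algebra K B] (e : B) (L : List ι)
    (u : ι → B) (c : ι → K) (hu : ∀ i ∈ L, ⁅e, u i⁆ = c i • u i) :
    ⁅e, (L.map u).prod⁆ = (L.map c).sum • (L.map u).prod := by
  induction L with
  | nil => simp [Ring.lie_def]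
  | cons i L ih =>
    rw [List.map_cons, List.prod_cons, lie_mul_leibniz, hu i List.mem_cons_self,
      ih fun j hj => hu j (List.mem_cons_of_mem i hj), List.map_cons, List.sum_cons, add_smul,
      smul_mul_assoc, mul_smul_comm]

end Commutators

section Omega

open scoped IsMulCommutative

variable {l : ℕ}

lemma Omega_eq_val_pfaffian : Omega l = (plusSubalgebra (2 * l)).val (pfaffian plusGen) := by
  rw [Omega, pfaffian, map_sum]
  refine sum_congr rfl fun p _ => ?_
  rw [sgn, Int.cast_smul_eq_zsmul, Units.smul_def, map_zsmul, map_list_prod, List.map_map]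
  rfl

lemma lie_eMinus_val_plusGen (k m i j : Fin (2 * l)) :
    ⁅uι (eMinus k m), (plusSubalgebra (2 * l)).val (plusGen i j)⁆
      = (plusSubalgebra (2 * l)).val
          ((if m = i then plusGen k j else 0) + (if m = j then plusGen i k else 0)) := by
  rw [val_plusGen, ← uι_lie, eMinus_lie_ePlus, uι, map_add, map_add]
  split_ifs <;> simp [val_plusGen, uι]

lemma lie_eMinus_val_pairProd (k m : Fin (2 * l)) (σ : Perm (Fin (2 * l))) :
    ⁅uι (eMinus k m), (plusSubalgebra (2 * l)).val (pairProd plusGen σ)⁆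
      = (plusSubalgebra (2 * l)).val (pairProd plusGen (Function.update id m k ∘ σ)) := by
  rw [pairProd, lie_map_prod _ _ _ _ fun h => lie_eMinus_val_plusGen k m _ _,
    sum_prod_erase_mul_eq_pairProd_update]

theorem commute_eMinus_Omega {k m : Fin (2 * l)} (hkm : k ≠ m) :
    Commute (uι (eMinus k m)) (Omega l) := by
  set C := univ.filter fun b => b * pairSwap l = pairSwap l * b
  have hC : (#C : ℂ) ≠ 0 := Nat.cast_ne_zero.2 (card_ne_zero_of_mem (by simp [C] : 1 ∈ C))
  have hzero : #C • ⁅uι (eMinus k m), Omega l⁆ = 0 := by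
    rw [← lie_nsmul, Omega_eq_val_pfaffian, ← map_nsmul,
      card_centralizer_smul_pfaffian fun i j => plusGen_swap i j, map_sum, lie_sum]
    have hterm : ∀ σ : Perm (Fin (2 * l)),
        ⁅uι (eMinus k m), (plusSubalgebra (2 * l)).val (Perm.sign σ • pairProd plusGen σ)⁆
          = (plusSubalgebra (2 * l)).val
              (Perm.sign σ • pairProd plusGen (Function.update id m k ∘ σ)) := fun σ => by
      rw [Units.smul_def, Units.smul_def, map_zsmul, map_zsmul, lie_zsmul, lie_eMinus_val_pairProd]
    rw [sum_congr rfl fun σ _ => hterm σ, ← map_sum,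
      sum_sign_smul_pairProd_comp_eq_zero _ hkm.symm (by simp [Function.update_of_ne hkm]),
      map_zero]
  rw [← Nat.cast_smul_eq_nsmul ℂ, smul_eq_zero, or_iff_right hC] at hzero
  exact commute_iff_lie_eq.2 hzero

theorem commute_ePlus_Omega (i j : Fin (2 * l)) : Commute (uι (ePlus i j)) (Omega l) := by
  rw [Omega_eq_val_pfaffian, ← val_plusGen]
  exact (Commute.all _ _).map _

end Omega

theorem lie_Hcar_Omega {l : ℕ} (a : Fin (2 * l) → ℂ) :
    ⁅uι (Hcar a), Omega l⁆ = (∑ i, a i) • Omega l := by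
  rw [Omega, lie_sum, smul_sum]
  refine sum_congr rfl fun p hp => ?_
  have hweight := lie_list_prod_of_lie_eq_smul (uι (Hcar a)) (leftPoints l p)
    (fun i => uι (ePlus i (p i))) (fun i => a i + a (p i))
    fun i _ => by rw [← uι_lie, Hcar_lie_ePlus, uι, map_smul]; rfl
  rw [sum_map_leftPoints hp] at hweight
  simp only [Ring.lie_def, mul_smul_comm, smul_mul_assoc, ← smul_sub] at hweight ⊢
  rw [hweight, smul_comm]

/-- Let `ℓ ≥ 2` and `n ≥ 1`. Then `Ω_ℓⁿ ∈ U(so(4ℓ, ℂ))` satisfies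
(a) `[E, Ω_ℓⁿ] = 0` for every simple positive root vector `E` of `so(4ℓ, ℂ)`, and
(b) `[H(a), Ω_ℓⁿ] = n(a₁ + ⋯ + a_{2ℓ}) Ω_ℓⁿ` for every `a ∈ ℂ^{2ℓ}`; i.e. `Ω_ℓⁿ` is a
highest weight vector of weight `2nω_{2ℓ} = n(ε₁ + ⋯ + ε_{2ℓ})` for the adjoint action of
`so(4ℓ, ℂ)` on its universal enveloping algebra. -/
theorem omega_pow_highest_weight_vector (l : ℕ) (hl : 2 ≤ l) (n : ℕ) :
    (∀ (k : ℕ) (hk : k + 1 < 2*l),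
      uι (eMinus (⟨k, by omega⟩ : Fin (2*l)) ⟨k+1, hk⟩) * Omega l ^ n
        - Omega l ^ n * uι (eMinus (⟨k, by omega⟩ : Fin (2*l)) ⟨k+1, hk⟩) = 0) ∧
    (uι (ePlus (⟨2*l-2, by omega⟩ : Fin (2*l)) ⟨2*l-1, by omega⟩) * Omega l ^ n
        - Omega l ^ n * uι (ePlus (⟨2*l-2, by omega⟩ : Fin (2*l)) ⟨2*l-1, by omega⟩) = 0) ∧
    (∀ a : Fin (2*l) → ℂ,
      uι (Hcar a) * Omega l ^ n - Omega l ^ n * uι (Hcar a)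
        = ((n : ℂ) * ∑ i, a i) • Omega l ^ n) := by
  refine ⟨fun k hk => ?_, ?_, fun a => ?_⟩
  · have hkm : (⟨k, by omega⟩ : Fin (2 * l)) ≠ ⟨k + 1, hk⟩ := by simp
    exact sub_eq_zero.2 ((commute_eMinus_Omega hkm).pow_right n).eq
  · exact sub_eq_zero.2 ((commute_ePlus_Omega _ _).pow_right n).eq
  · have h := lie_list_prod_of_lie_eq_smul (uι (Hcar a)) (List.replicate n ())
      (fun _ => Omega l) (fun _ => ∑ i, a i) fun _ _ => lie_Hcar_Omega a
    simpa [Ring.lie_def, List.prod_replicate, nsmul_eq_mul] using h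

end
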